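/- Let V_h be a finite-dimensional Hilbert space with SPD operator A_h, and let V_1, …, V_J be subspaces with injections I_j: V_j → V_h and SPD local operators A_j. Suppose (i) every v ∈ V_h admits a decomposition v = Σ_j I_j v_j with Σ_j ⟨A_j v_j, v_j⟩ ≤ c₀⁻¹ ⟨A_h v, v⟩, and (ii) for every choice of v_j ∈ V_j, ⟨A_h (Σ_j I_j v_j), Σ_j I_j v_j⟩ ≤ c₁ Σ_j ⟨A_j v_j, v_j⟩. Then the additive Schwarz preconditioned operator B_h A_h with B_h = Σ_j I_j A_j^{-1} I_jᵀ satisfies λ_min(B_h A_h) ≥ c₀ and λ_max(B_h A_h) ≤ c₁, hence κ(B_h A_h) ≤ c₁/c₀. -/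
import Mathlib

open RealInnerProductSpace

private lemma cs_aux (x y z : ℝ) (h : ∀ t : ℝ, 0 ≤ x + 2 * t * y + t ^ 2 * z) :
    y ^ 2 ≤ x * z := by
  have hd := discrim_le_zero (a := z) (b := 2 * y) (c := x) (fun t => by
    have := h t; nlinarith [this])
  rw [discrim] at hd
  nlinarith [hd]

/-- abstract additive Schwarz theory: Let `V_h = V` be a
finite-dimensional Hilbert space with SPD operator `A` (identifying `V'` with
`V` via the inner product), subspaces `Vj j` with natural injections, SPD local
forms `aj j` (the local operators `A_j`), and local solve operators
`S j = I_j A_j⁻¹ I_jᵀ`, characterized by `S j f ∈ V_j` and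
`a_j(S j f, w) = ⟨f, w⟩ ∀ w ∈ V_j`; the preconditioner is `B = Σ_j S j`.
Assume (i) every `v` admits a decomposition `v = Σ_j v_j`, `v_j ∈ V_j`, with
`Σ_j a_j(v_j, v_j) ≤ c₀⁻¹ ⟨A v, v⟩`, and (ii) for every admissible decomposition,
`⟨A(Σ_j v_j), Σ_j v_j⟩ ≤ c₁ Σ_j a_j(v_j, v_j)`.  Then, in terms of the `A`-inner
product Rayleigh quotients of `B A`, `λ_min(B A) ≥ c₀` and `λ_max(B A) ≤ c₁`,
hence `κ(B A) ≤ c₁/c₀`. -/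
theorem stmt_12 {V : Type*} [NormedAddCommGroup V] [InnerProductSpace ℝ V]
    [FiniteDimensional ℝ V]
    {J : ℕ} (Vj : Fin J → Submodule ℝ V)
    (A : V →ₗ[ℝ] V)
    (hA_sym : ∀ v w, ⟪A v, w⟫ = ⟪v, A w⟫)
    (hA_pos : ∀ v, v ≠ 0 → 0 < ⟪A v, v⟫)
    (aj : Fin J → V →ₗ[ℝ] V →ₗ[ℝ] ℝ)
    (haj_sym : ∀ j v w, aj j v w = aj j w v)
    (haj_pos : ∀ j, ∀ v ∈ Vj j, v ≠ 0 → 0 < aj j v v)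
    (S : Fin J → V →ₗ[ℝ] V)
    (hS_mem : ∀ j f, S j f ∈ Vj j)
    (hS_solve : ∀ j (f : V), ∀ w ∈ Vj j, aj j (S j f) w = ⟪f, w⟫)
    (B : V →ₗ[ℝ] V) (hB : ∀ f, B f = ∑ j, S j f)
    (c₀ c₁ : ℝ) (hc₀ : 0 < c₀) (hc₁ : 0 < c₁)
    (hstable : ∀ v : V, ∃ d : Fin J → V, (∀ j, d j ∈ Vj j) ∧ (∑ j, d j) = v ∧
        (∑ j, aj j (d j) (d j)) ≤ c₀⁻¹ * ⟪A v, v⟫)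
    (hbounded : ∀ d : Fin J → V, (∀ j, d j ∈ Vj j) →
        ⟪A (∑ j, d j), (∑ j, d j)⟫ ≤ c₁ * ∑ j, aj j (d j) (d j)) :
    (∀ v : V, c₀ * ⟪A v, v⟫ ≤ ⟪A (B (A v)), v⟫) ∧
    (∀ v : V, ⟪A (B (A v)), v⟫ ≤ c₁ * ⟪A v, v⟫) ∧
    (∀ v w : V, v ≠ 0 → w ≠ 0 →
      ⟪A (B (A v)), v⟫ / ⟪A v, v⟫ ≤ (c₁ / c₀) * (⟪A (B (A w)), w⟫ / ⟪A w, w⟫)) := by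
  -- nonnegativity of A-quadratic form
  have hA_nonneg : ∀ v : V, 0 ≤ ⟪A v, v⟫ := by
    intro v
    by_cases h : v = 0
    · simp [h]
    · exact (hA_pos v h).le
  -- nonnegativity of aj on Vj
  have haj_nonneg : ∀ j, ∀ v ∈ Vj j, 0 ≤ aj j v v := by
    intro j v hv
    by_cases h : v = 0
    · simp [h]
    · exact (haj_pos j v hv h).le
  -- Cauchy-Schwarz for A
  have hA_cs : ∀ u w : V, ⟪A u, w⟫ ^ 2 ≤ ⟪A u, u⟫ * ⟪A w, w⟫ := by
    intro u w
    apply cs_aux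
    intro t
    have h := hA_nonneg (u + t • w)
    have hsym : ⟪A w, u⟫ = ⟪A u, w⟫ := by
      rw [hA_sym, real_inner_comm]
    simp only [map_add, map_smul, inner_add_left, inner_add_right, inner_smul_left,
      inner_smul_right, conj_trivial] at h
    rw [hsym] at h
    nlinarith [h]
  -- Cauchy-Schwarz for aj on Vj
  have haj_cs : ∀ j, ∀ u ∈ Vj j, ∀ w ∈ Vj j, aj j u w ^ 2 ≤ aj j u u * aj j w w := by
    intro j u hu w hw
    apply cs_aux
    intro t
    have h := haj_nonneg j (u + t • w) (by exact (Vj j).add_mem hu ((Vj j).smul_mem t hw))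
    have hsym : aj j w u = aj j u w := haj_sym j w u
    simp only [map_add, map_smul, LinearMap.add_apply, LinearMap.smul_apply,
      smul_eq_mul] at h
    rw [hsym] at h
    nlinarith [h]
  -- key identity: ⟪A (B (A v)), v⟫ = ∑ aj j (S j (A v)) (S j (A v))
  have hkey : ∀ v : V, ⟪A (B (A v)), v⟫ = ∑ j, aj j (S j (A v)) (S j (A v)) := by
    intro v
    rw [hA_sym, hB, sum_inner]
    refine Finset.sum_congr rfl fun j _ => ?_
    rw [hS_solve j (A v) (S j (A v)) (hS_mem j (A v)), real_inner_comm]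
  -- T nonneg
  have hT_nonneg : ∀ v : V, 0 ≤ ⟪A (B (A v)), v⟫ := by
    intro v
    rw [hkey]
    exact Finset.sum_nonneg fun j _ => haj_nonneg j _ (hS_mem j _)
  -- upper bound
  have hupper : ∀ v : V, ⟪A (B (A v)), v⟫ ≤ c₁ * ⟪A v, v⟫ := by
    intro v
    set T := ⟪A (B (A v)), v⟫ with hT
    set Q := ⟪A v, v⟫ with hQ
    have hBb : ⟪A (B (A v)), B (A v)⟫ ≤ c₁ * T := by
      have h := hbounded (fun j => S j (A v)) (fun j => hS_mem j (A v))
      rw [hT, hkey v, hB]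
      simpa using h
    have hcs : T ^ 2 ≤ ⟪A (B (A v)), B (A v)⟫ * Q := hA_cs (B (A v)) v
    have hABB : 0 ≤ ⟪A (B (A v)), B (A v)⟫ := hA_nonneg _
    have hTn : 0 ≤ T := hT_nonneg v
    have hQn : 0 ≤ Q := hA_nonneg v
    have hTT : T * T ≤ (c₁ * Q) * T := by nlinarith [mul_le_mul_of_nonneg_right hBb hQn]
    rcases eq_or_lt_of_le hTn with h0 | h0
    · rw [← h0]; positivity
    · exact le_of_mul_le_mul_right hTT h0
  -- lower bound
  have hlower : ∀ v : V, c₀ * ⟪A v, v⟫ ≤ ⟪A (B (A v)), v⟫ := by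
    intro v
    obtain ⟨d, hd_mem, hd_sum, hd_bd⟩ := hstable v
    set T := ⟪A (B (A v)), v⟫ with hT
    set Q := ⟪A v, v⟫ with hQ
    have hTn : 0 ≤ T := hT_nonneg v
    have hQn : 0 ≤ Q := hA_nonneg v
    -- Q = ∑ aj j (S j (A v)) (d j)
    have hQsum : Q = ∑ j, aj j (S j (A v)) (d j) := by
      have : Q = ⟪A v, ∑ j, d j⟫ := by rw [hd_sum]
      rw [this, inner_sum]
      refine Finset.sum_congr rfl fun j _ => ?_
      rw [hS_solve j (A v) (d j) (hd_mem j)]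
    -- termwise CS then sum CS
    have hstep : Q ≤ ∑ j, Real.sqrt (aj j (S j (A v)) (S j (A v))) *
        Real.sqrt (aj j (d j) (d j)) := by
      rw [hQsum]
      refine Finset.sum_le_sum fun j _ => ?_
      have hcs := haj_cs j (S j (A v)) (hS_mem j (A v)) (d j) (hd_mem j)
      have h1 : 0 ≤ aj j (S j (A v)) (S j (A v)) := haj_nonneg j _ (hS_mem j _)
      have h2 : 0 ≤ aj j (d j) (d j) := haj_nonneg j _ (hd_mem j)
      have : aj j (S j (A v)) (d j) ≤ Real.sqrt (aj j (S j (A v)) (S j (A v)) *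
          aj j (d j) (d j)) := by
        calc aj j (S j (A v)) (d j) ≤ |aj j (S j (A v)) (d j)| := le_abs_self _
          _ = Real.sqrt (aj j (S j (A v)) (d j) ^ 2) := (Real.sqrt_sq_eq_abs _).symm
          _ ≤ _ := Real.sqrt_le_sqrt hcs
      rwa [Real.sqrt_mul h1] at this
    have hsumcs : (∑ j, Real.sqrt (aj j (S j (A v)) (S j (A v))) *
        Real.sqrt (aj j (d j) (d j))) ^ 2 ≤
        (∑ j, aj j (S j (A v)) (S j (A v))) * ∑ j, aj j (d j) (d j) := by
      have h := Finset.sum_mul_sq_le_sq_mul_sq Finset.univ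
        (fun j => Real.sqrt (aj j (S j (A v)) (S j (A v))))
        (fun j => Real.sqrt (aj j (d j) (d j)))
      calc (∑ j, Real.sqrt (aj j (S j (A v)) (S j (A v))) *
          Real.sqrt (aj j (d j) (d j))) ^ 2
          ≤ (∑ j, Real.sqrt (aj j (S j (A v)) (S j (A v))) ^ 2) *
            ∑ j, Real.sqrt (aj j (d j) (d j)) ^ 2 := h
        _ = _ := by
            congr 1
            · exact Finset.sum_congr rfl fun j _ =>
                Real.sq_sqrt (haj_nonneg j _ (hS_mem j _))
            · exact Finset.sum_congr rfl fun j _ =>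
                Real.sq_sqrt (haj_nonneg j _ (hd_mem j))
    have hP_nonneg : 0 ≤ ∑ j, Real.sqrt (aj j (S j (A v)) (S j (A v))) *
        Real.sqrt (aj j (d j) (d j)) :=
      Finset.sum_nonneg fun j _ => mul_nonneg (Real.sqrt_nonneg _) (Real.sqrt_nonneg _)
    have hQ2 : Q ^ 2 ≤ T * (c₀⁻¹ * Q) := by
      have h1 : Q ^ 2 ≤ (∑ j, Real.sqrt (aj j (S j (A v)) (S j (A v))) *
          Real.sqrt (aj j (d j) (d j))) ^ 2 := by
        by_cases hq : 0 ≤ Q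
        · exact pow_le_pow_left₀ hq hstep 2
        · nlinarith
      have h2 : (∑ j, aj j (S j (A v)) (S j (A v))) * ∑ j, aj j (d j) (d j)
          ≤ T * (c₀⁻¹ * Q) := by
        rw [hT, hkey v]
        have hTsum : 0 ≤ ∑ j, aj j (S j (A v)) (S j (A v)) :=
          Finset.sum_nonneg fun j _ => haj_nonneg j _ (hS_mem j _)
        exact mul_le_mul_of_nonneg_left hd_bd hTsum
      linarith [hsumcs]
    have hc₀i : 0 < c₀⁻¹ := inv_pos.mpr hc₀
    rcases eq_or_lt_of_le hQn with h0 | h0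
    · rw [← h0]; simpa using hTn
    · have hQQ : Q * Q ≤ (c₀⁻¹ * T) * Q := by nlinarith [hQ2]
      have hQle : Q ≤ c₀⁻¹ * T := le_of_mul_le_mul_right hQQ h0
      have := mul_le_mul_of_nonneg_left hQle hc₀.le
      rwa [← mul_assoc, mul_inv_cancel₀ (ne_of_gt hc₀), one_mul] at this
  refine ⟨hlower, hupper, ?_⟩
  intro v w hv hw
  have hQv : 0 < ⟪A v, v⟫ := hA_pos v hv
  have hQw : 0 < ⟪A w, w⟫ := hA_pos w hw
  have h1 : ⟪A (B (A v)), v⟫ / ⟪A v, v⟫ ≤ c₁ :=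
    (div_le_iff₀ hQv).mpr (by linarith [hupper v])
  have h2 : c₀ ≤ ⟪A (B (A w)), w⟫ / ⟪A w, w⟫ :=
    (le_div_iff₀ hQw).mpr (by linarith [hlower w])
  calc ⟪A (B (A v)), v⟫ / ⟪A v, v⟫ ≤ c₁ := h1
    _ = (c₁ / c₀) * c₀ := by field_simp
    _ ≤ (c₁ / c₀) * (⟪A (B (A w)), w⟫ / ⟪A w, w⟫) :=
        mul_le_mul_of_nonneg_left h2 (div_nonneg hc₁.le hc₀.le)
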